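/- arXiv:2302.12997 — 4 statements merged into one kernel-verified Lean document; each statement's English description precedes it below -/
import Mathlib

section
/- For the Walsh-Fejér kernel, K_{2^n}(x) = 2^{t-1} if x ∈ I_n(e_t) with t < n (i.e., x ∈ I_t \ I_{t+1} and x agrees with e_t on the first n coordinates), K_{2^n}(x) = (2^n+1)/2 if x ∈ I_n, and K_{2^n}(x) = 0 otherwise. -/
open MeasureTheory Finset

noncomputable section

/-- The dyadic group: countable product of `ZMod 2`. -/
abbrev G := ℕ → ZMod 2

instance : MeasurableSpace (ZMod 2) := ⊤

/-- Walsh–Paley function `w n`. -/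
def walsh (n : ℕ) (x : G) : ℝ :=
  ∏ k ∈ Finset.range (n + 1), if n.testBit k then (-1 : ℝ) ^ (x k).val else 1

/-- Walsh–Dirichlet kernel `D n = ∑_{k<n} w k`. -/
def Dker (n : ℕ) (x : G) : ℝ := ∑ k ∈ Finset.range n, walsh k x

/-- Walsh–Fejér kernel `K n = (1/n) ∑_{k=1}^n D k`. -/
def Kker (n : ℕ) (x : G) : ℝ := (1 / (n : ℝ)) * ∑ k ∈ Finset.range n, Dker (k + 1) x

/-- Dyadic cylinder `I_n(y)`: points agreeing with `y` in the first `n` coordinates. -/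
def cyl (n : ℕ) (y : G) : Set G := {x | ∀ j < n, x j = y j}

/-- `I_n = I_n(0)`. -/
def Iset (n : ℕ) : Set G := cyl n 0

/-- The generator `e t`, with a single `1` in coordinate `t`. -/
def e (t : ℕ) : G := fun j => if j = t then 1 else 0

/-! ### Auxiliary lemmas -/

lemma walsh_eq (m N : ℕ) (hm : m < N) (x : G) :
    walsh m x = ∏ k ∈ Finset.range N, if m.testBit k then (-1 : ℝ) ^ (x k).val else 1 := by
  unfold walsh
  apply Finset.prod_subset
  · exact Finset.range_subset_range.2 hm
  · intro k _ hk
    simp only [Finset.mem_range, not_lt] at hk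
    have hb : m.testBit k = false := by
      apply Nat.testBit_eq_false_of_lt
      calc m < 2 ^ m := (Nat.lt_two_pow_self (n := m))
      _ ≤ 2 ^ k := Nat.pow_le_pow_right (by norm_num) (by omega)
    simp [hb]

lemma walsh_two_pow (n : ℕ) (x : G) : walsh (2 ^ n) x = (-1 : ℝ) ^ (x n).val := by
  rw [walsh_eq (2 ^ n) (2 ^ n + 1) (by omega) x]
  rw [Finset.prod_eq_single n]
  · rw [Nat.testBit_two_pow_self, if_pos rfl]
  · intro k _ hk
    rw [Nat.testBit_two_pow_of_ne (Ne.symm hk), if_neg (by simp)]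
  · intro h
    exact absurd (Finset.mem_range.2 (by have := (Nat.lt_two_pow_self (n := n)); omega)) h

lemma testBit_pow_add {n j k : ℕ} (h : j < 2 ^ n) :
    (2 ^ n + j).testBit k = if k = n then true else j.testBit k := by
  rcases lt_trichotomy k n with h1 | rfl | h1
  · rw [if_neg h1.ne, Nat.testBit_two_pow_add_gt h1 j]
  · rw [if_pos rfl, Nat.testBit_two_pow_add_eq, Nat.testBit_eq_false_of_lt h]
    rfl
  · rw [if_neg h1.ne']
    rw [Nat.testBit_eq_false_of_lt, Nat.testBit_eq_false_of_lt]
    · calc j < 2 ^ n := h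
        _ ≤ 2 ^ k := Nat.pow_le_pow_right (by norm_num) (by omega)
    · calc 2 ^ n + j < 2 ^ n + 2 ^ n := by omega
        _ = 2 ^ (n + 1) := by ring
        _ ≤ 2 ^ k := Nat.pow_le_pow_right (by norm_num) (by omega)

lemma walsh_pow_add {n j : ℕ} (hj : j < 2 ^ n) (x : G) :
    walsh (2 ^ n + j) x = (-1 : ℝ) ^ (x n).val * walsh j x := by
  set N := 2 ^ n + j + 1 with hN
  have hnN : n < N := by have := (Nat.lt_two_pow_self (n := n)); omega
  rw [walsh_eq (2 ^ n + j) N (by omega) x, walsh_eq j N (by omega) x]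
  have hmem : n ∈ Finset.range N := Finset.mem_range.2 hnN
  rw [← Finset.mul_prod_erase _ _ hmem, ← Finset.mul_prod_erase _ _ hmem]
  have hb : j.testBit n = false := Nat.testBit_eq_false_of_lt hj
  have hb2 : (2 ^ n + j).testBit n = true := by rw [testBit_pow_add hj, if_pos rfl]
  simp only [hb, hb2, Bool.false_eq_true, if_false, if_true, one_mul]
  congr 1
  apply Finset.prod_congr rfl
  intro k hk
  have hkn : k ≠ n := (Finset.mem_erase.1 hk).1
  rw [testBit_pow_add hj, if_neg hkn]

lemma Dker_pow_add {n m : ℕ} (hm : m ≤ 2 ^ n) (x : G) :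
    Dker (2 ^ n + m) x = Dker (2 ^ n) x + (-1 : ℝ) ^ (x n).val * Dker m x := by
  unfold Dker
  rw [Finset.sum_range_add, Finset.mul_sum]
  congr 1
  apply Finset.sum_congr rfl
  intro j hj
  exact walsh_pow_add (lt_of_lt_of_le (Finset.mem_range.1 hj) hm) x

lemma zmod2_cases : ∀ a : ZMod 2, a = 0 ∨ a = 1 := by decide

lemma Dker_pow (n : ℕ) (x : G) :
    Dker (2 ^ n) x = if (∀ j, j < n → x j = 0) then ((2 : ℝ) ^ n) else 0 := by
  induction n with
  | zero =>
    simp only [pow_zero]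
    rw [if_pos (by omega)]
    unfold Dker
    rw [Finset.sum_range_one]
    unfold walsh
    simp
  | succ n ih =>
    have : 2 ^ (n + 1) = 2 ^ n + 2 ^ n := by ring
    rw [this, Dker_pow_add le_rfl x, ih]
    rcases zmod2_cases (x n) with h0 | h1
    · rw [h0]
      simp only [ZMod.val_zero, pow_zero, one_mul]
      by_cases hI : ∀ j, j < n → x j = 0
      · have hI' : ∀ j, j < n + 1 → x j = 0 := by
          intro j hj
          rcases Nat.lt_succ_iff_lt_or_eq.1 hj with h | rfl
          · exact hI j h
          · exact h0
        rw [if_pos hI, if_pos hI']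
        ring
      · have hI' : ¬ ∀ j, j < n + 1 → x j = 0 := fun h => hI fun j hj => h j (by omega)
        rw [if_neg hI, if_neg hI']
        ring
    · rw [h1]
      have hone : ((1 : ZMod 2)).val = 1 := rfl
      rw [hone, pow_one]
      have hx : ¬ ∀ j, j < n + 1 → x j = 0 := by
        intro h
        have hxx := h n (Nat.lt_succ_self n)
        rw [h1] at hxx
        exact one_ne_zero hxx
      rw [if_neg hx]
      by_cases hI : ∀ j, j < n → x j = 0
      · rw [if_pos hI]; ring
      · rw [if_neg hI]; ring

/-- Partial sum of Dirichlet kernels. -/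
def Ssum (n : ℕ) (x : G) : ℝ := ∑ k ∈ Finset.range n, Dker (k + 1) x

lemma Ssum_rec (n : ℕ) (x : G) :
    Ssum (2 ^ (n + 1)) x
      = (1 + (-1 : ℝ) ^ (x n).val) * Ssum (2 ^ n) x + 2 ^ n * Dker (2 ^ n) x := by
  have h2 : 2 ^ (n + 1) = 2 ^ n + 2 ^ n := by ring
  unfold Ssum
  rw [h2, Finset.sum_range_add]
  have hstep : ∀ j ∈ Finset.range (2 ^ n),
      Dker (2 ^ n + j + 1) x
        = Dker (2 ^ n) x + (-1 : ℝ) ^ (x n).val * Dker (j + 1) x := by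
    intro j hj
    exact Dker_pow_add (n := n) (m := j + 1) (by have := Finset.mem_range.1 hj; omega) x
  rw [Finset.sum_congr rfl hstep, Finset.sum_add_distrib, Finset.sum_const,
    Finset.card_range, ← Finset.mul_sum]
  push_cast
  ring

lemma key (n : ℕ) (x : G) :
    ((∀ j, j < n → x j = 0) → Ssum (2 ^ n) x = 2 ^ n * (((2 : ℝ) ^ n + 1) / 2)) ∧
    (∀ t, t < n → (∀ j, j < n → x j = e t j) → Ssum (2 ^ n) x = 2 ^ n * ((2 : ℝ) ^ t / 2)) ∧
    ((¬ (∀ j, j < n → x j = 0) ∧ ∀ t, t < n → ¬ (∀ j, j < n → x j = e t j)) →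
      Ssum (2 ^ n) x = 0) := by
  induction n with
  | zero =>
    refine ⟨fun _ => ?_, fun t ht => by omega, fun h => absurd (by omega) h.1⟩
    norm_num [Ssum, Dker, walsh]
  | succ n ih =>
    obtain ⟨ih1, ih2, ih3⟩ := ih
    have hD := Dker_pow n x
    have hrec := Ssum_rec n x
    have hone : ((1 : ZMod 2)).val = 1 := rfl
    refine ⟨fun h => ?_, fun t ht h => ?_, fun hh => ?_⟩
    · -- x ∈ I_{n+1}
      have hn : x n = 0 := h n (by omega)
      have hIn : ∀ j, j < n → x j = 0 := fun j hj => h j (by omega)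
      rw [hrec, hn, ih1 hIn, hD, if_pos hIn]
      simp only [ZMod.val_zero, pow_zero]
      ring
    · rcases Nat.lt_succ_iff_lt_or_eq.1 ht with htn | heq
      · -- t < n : x ∈ cyl n (e t), x n = 0
        have hn : x n = 0 := by
          have := h n (by omega)
          rw [this]; unfold e; rw [if_neg (by omega)]
        have hcyl : ∀ j, j < n → x j = e t j := fun j hj => h j (by omega)
        have hxt : x t = 1 := by rw [h t (by omega)]; unfold e; rw [if_pos rfl]
        have hnI : ¬ ∀ j, j < n → x j = 0 := fun hh => by
          rw [hh t htn] at hxt; exact one_ne_zero hxt.symm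
        rw [hrec, hn, ih2 t htn hcyl, hD, if_neg hnI]
        simp only [ZMod.val_zero, pow_zero]
        ring
      · -- t = n : x ∈ I_n, x n = 1
        have heq2 : n = t := heq.symm
        subst heq2
        have hn : x n = 1 := by rw [h n (by omega)]; unfold e; rw [if_pos rfl]
        have hIn : ∀ j, j < n → x j = 0 := by
          intro j hj
          rw [h j (by omega)]; unfold e; rw [if_neg (by omega)]
        rw [hrec, hn, hone, hD, if_pos hIn]
        ring
    · -- remaining case
      obtain ⟨hI, hc⟩ := hh
      by_cases hIn : ∀ j, j < n → x j = 0
      · -- x ∈ I_n; then x n ≠ 0, so x ∈ cyl (n+1) (e n): contradiction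
        exfalso
        have hn : x n = 1 := by
          rcases zmod2_cases (x n) with h0 | h1
          · exact absurd (fun j hj => by
              rcases Nat.lt_succ_iff_lt_or_eq.1 hj with h | rfl
              exacts [hIn j h, h0]) hI
          · exact h1
        apply hc n (by omega)
        intro j hj
        rcases Nat.lt_succ_iff_lt_or_eq.1 hj with h | rfl
        · rw [hIn j h]; unfold e; rw [if_neg (by omega)]
        · rw [hn]; unfold e; rw [if_pos rfl]
      · by_cases hct : ∃ t, t < n ∧ ∀ j, j < n → x j = e t j
        · -- x ∈ cyl n (e t); then x n = 1 (else contradiction), and Dker = 0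
          obtain ⟨t, htn, hcyl⟩ := hct
          have hn : x n = 1 := by
            rcases zmod2_cases (x n) with h0 | h1
            · exfalso
              apply hc t (by omega)
              intro j hj
              rcases Nat.lt_succ_iff_lt_or_eq.1 hj with h | rfl
              · exact hcyl j h
              · rw [h0]; unfold e; rw [if_neg (by omega)]
            · exact h1
          rw [hrec, hn, hone, hD, if_neg hIn]
          ring
        · -- neither: Ssum (2^n) = 0 and Dker = 0
          have hS := ih3 ⟨hIn, fun t ht h => hct ⟨t, ht, h⟩⟩
          rw [hrec, hS, hD, if_neg hIn]
          ring

/-- the values of the Fejér kernel `K_{2^n}`. -/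
theorem fejer_pow_two (n : ℕ) (x : G) :
    (∀ t, t < n → x ∈ cyl n (e t) → Kker (2 ^ n) x = (2 : ℝ) ^ t / 2) ∧
    (x ∈ Iset n → Kker (2 ^ n) x = ((2 : ℝ) ^ n + 1) / 2) ∧
    ((x ∉ Iset n ∧ ∀ t, t < n → x ∉ cyl n (e t)) → Kker (2 ^ n) x = 0) := by
  obtain ⟨k1, k2, k3⟩ := key n x
  have hKS : Kker (2 ^ n) x = (1 / ((2 : ℝ) ^ n)) * Ssum (2 ^ n) x := by
    unfold Kker Ssum
    push_cast
    ring
  have hpos : ((2 : ℝ) ^ n) ≠ 0 := by positivity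
  have hmemI : x ∈ Iset n ↔ ∀ j, j < n → x j = 0 := by
    unfold Iset cyl
    simp [Set.mem_setOf_eq]
  have hmemc : ∀ t, x ∈ cyl n (e t) ↔ ∀ j, j < n → x j = e t j := by
    intro t
    unfold cyl
    simp [Set.mem_setOf_eq]
  refine ⟨fun t ht hx => ?_, fun hx => ?_, fun hh => ?_⟩
  · rw [hKS, k2 t ht ((hmemc t).1 hx)]
    field_simp
  · rw [hKS, k1 (hmemI.1 hx)]
    field_simp
  · obtain ⟨hx1, hx2⟩ := hh
    rw [hKS, k3 ⟨fun h => hx1 (hmemI.2 h), fun t ht h => hx2 t ht ((hmemc t).2 h)⟩]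
    ring
end
end

section
/- The complement of I_M in G decomposes as the disjoint union over 0 ≤ k < l ≤ M-1 of the sets I_{l+1}(e_k + e_l), together with the union over 0 ≤ k ≤ M-1 of the sets I_M(e_k). -/
open MeasureTheory Finset

noncomputable section

/-!
In `ZMod 2` a point agrees with a `0`–`1` valued centre exactly when the two have the same
support, and `e k + e l` is the indicator of `{k, l}`; so membership in each cylinder only
records the support of `x` below the cylinder's length. A point outside `I_M` has a least
support point `k < M`; if a second one `l < M` follows, `x ∈ I_{l+1}(e_k + e_l)`, otherwise
`x ∈ I_M(e_k)`. Two different cylinders of the family prescribe incompatible supports.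
-/

theorem Nat.exists_lt_iff_two_least_or_unique (p : ℕ → Prop) [DecidablePred p] (M : ℕ) :
    (∃ j < M, p j) ↔
      (∃ k l, k < l ∧ l < M ∧ ∀ j < l + 1, (p j ↔ j = k ∨ j = l)) ∨
        ∃ k < M, ∀ j < M, (p j ↔ j = k) := by
  constructor
  · intro hex
    obtain ⟨k, ⟨hkM, hk⟩, hk_least⟩ : ∃ k, (k < M ∧ p k) ∧ ∀ j < k, ¬ (j < M ∧ p j) :=
      ⟨Nat.find hex, Nat.find_spec hex, fun _ => Nat.find_min hex⟩
    have hk_le : ∀ j < M, p j → k ≤ j := fun j hjM hj =>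
      not_lt.1 fun hjk => hk_least j hjk ⟨hjM, hj⟩
    by_cases hnext : ∃ l, (k < l ∧ l < M) ∧ p l
    · obtain ⟨l, ⟨⟨hkl, hlM⟩, hl⟩, hl_least⟩ :
          ∃ l, ((k < l ∧ l < M) ∧ p l) ∧ ∀ j < l, ¬ ((k < j ∧ j < M) ∧ p j) :=
        ⟨Nat.find hnext, Nat.find_spec hnext, fun _ => Nat.find_min hnext⟩
      refine Or.inl ⟨k, l, hkl, hlM, fun j hj => ⟨fun hj' => ?_, ?_⟩⟩
      · have := hk_le j (by omega) hj'
        have : ¬ (k < j ∧ j < l) := fun h => hl_least j h.2 ⟨⟨h.1, by omega⟩, hj'⟩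
        omega
      · rintro (rfl | rfl)
        exacts [hk, hl]
    · refine Or.inr ⟨k, hkM, fun j hj => ⟨fun hj' => ?_, by rintro rfl; exact hk⟩⟩
      have := hk_le j hj hj'
      have : ¬ k < j := fun h => hnext ⟨j, ⟨h, hj⟩, hj'⟩
      omega
  · rintro (⟨k, l, hkl, hlM, h⟩ | ⟨k, hkM, h⟩)
    exacts [⟨k, by omega, (h k (by omega)).2 (Or.inl rfl)⟩, ⟨k, hkM, (h k hkM).2 rfl⟩]

theorem ZMod.eq_ite_one_zero_iff (a : ZMod 2) (P : Prop) [Decidable P] :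
    a = (if P then 1 else 0) ↔ (a ≠ 0 ↔ P) := by
  obtain rfl | rfl : a = 0 ∨ a = 1 := by revert a; decide
  all_goals split_ifs <;> simp_all

theorem mem_cyl_ite_iff {n : ℕ} {p : ℕ → Prop} [DecidablePred p] {x : G} :
    x ∈ cyl n (fun j => if p j then 1 else 0) ↔ ∀ j < n, (x j ≠ 0 ↔ p j) := by
  simp only [cyl, Set.mem_ofPred_eq, ZMod.eq_ite_one_zero_iff]

theorem disjoint_cyl_ite {n n' : ℕ} {p q : ℕ → Prop} [DecidablePred p] [DecidablePred q]
    (h : ¬ ∀ j < min n n', (p j ↔ q j)) :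
    Disjoint (cyl n fun j => if p j then 1 else 0) (cyl n' fun j => if q j then 1 else 0) := by
  refine Set.disjoint_left.2 fun x hx hx' => h fun j hj => ?_
  rw [mem_cyl_ite_iff] at hx hx'
  exact (hx j (by omega)).symm.trans (hx' j (by omega))

theorem e_eq_ite (k : ℕ) : e k = fun j => if j = k then 1 else 0 := rfl

theorem e_add_e_eq_ite {k l : ℕ} (hkl : k ≠ l) :
    e k + e l = fun j => if j = k ∨ j = l then 1 else 0 := by
  funext j
  by_cases hk : j = k <;> by_cases hl : j = l <;> simp_all [e]

theorem notMem_Iset_iff {n : ℕ} {x : G} : x ∉ Iset n ↔ ∃ j < n, x j ≠ 0 := by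
  simp [Iset, cyl]

theorem compl_Iset_eq_iUnion (M : ℕ) :
    (Iset M)ᶜ =
      (⋃ (k : ℕ) (l : ℕ) (_ : k < l) (_ : l < M), cyl (l + 1) (e k + e l)) ∪
        ⋃ (k : ℕ) (_ : k < M), cyl M (e k) := by
  ext x
  rw [Set.mem_compl_iff, notMem_Iset_iff, Nat.exists_lt_iff_two_least_or_unique]
  simp only [Set.mem_union, Set.mem_iUnion, exists_prop]
  refine or_congr (exists₂_congr fun k l => and_congr_right fun hkl => and_congr_right fun _ => ?_)
    (exists_congr fun k => and_congr_right fun _ => ?_)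
  · rw [e_add_e_eq_ite hkl.ne, mem_cyl_ite_iff]
  · rw [e_eq_ite, mem_cyl_ite_iff]

theorem disjoint_cyl_e_add_e {k l k' l' : ℕ} (hkl : k < l) (hkl' : k' < l')
    (hne : (k, l) ≠ (k', l')) :
    Disjoint (cyl (l + 1) (e k + e l)) (cyl (l' + 1) (e k' + e l')) := by
  rw [e_add_e_eq_ite hkl.ne, e_add_e_eq_ite hkl'.ne]
  refine disjoint_cyl_ite fun h => hne ?_
  have := h k; have := h l; have := h k'; have := h l'
  simp only [Prod.mk.injEq]
  omega

theorem disjoint_cyl_e {n k k' : ℕ} (hk : k < n) (hne : k ≠ k') :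
    Disjoint (cyl n (e k)) (cyl n (e k')) := by
  rw [e_eq_ite, e_eq_ite]
  refine disjoint_cyl_ite fun h => hne ?_
  have := h k
  omega

theorem disjoint_cyl_e_add_e_cyl_e {n k l k' : ℕ} (hkl : k < l) (hln : l < n) :
    Disjoint (cyl (l + 1) (e k + e l)) (cyl n (e k')) := by
  rw [e_add_e_eq_ite hkl.ne, e_eq_ite]
  refine disjoint_cyl_ite fun h => ?_
  have := h k; have := h l; have := h k'
  omega

/-- the disjoint decomposition of the complement of `I_M`. -/
theorem complement_decomposition (M : ℕ) :
    ((Iset M)ᶜ =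
      (⋃ (k : ℕ) (l : ℕ) (_ : k < l) (_ : l < M), cyl (l + 1) (e k + e l)) ∪
        ⋃ (k : ℕ) (_ : k < M), cyl M (e k)) ∧
    (∀ k l k' l', k < l → l < M → k' < l' → l' < M → (k, l) ≠ (k', l') →
      Disjoint (cyl (l + 1) (e k + e l)) (cyl (l' + 1) (e k' + e l'))) ∧
    (∀ k k', k < M → k' < M → k ≠ k' → Disjoint (cyl M (e k)) (cyl M (e k'))) ∧
    (∀ k l k', k < l → l < M → k' < M →
      Disjoint (cyl (l + 1) (e k + e l)) (cyl M (e k'))) :=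
  ⟨compl_Iset_eq_iUnion M, fun _ _ _ _ hkl _ hkl' _ hne => disjoint_cyl_e_add_e hkl hkl' hne,
    fun _ _ hk _ hne => disjoint_cyl_e hk hne,
    fun _ _ _ hkl hlM _ => disjoint_cyl_e_add_e_cyl_e hkl hlM⟩
end
end

section
/- Let n ≥ 2^M and x ∈ I_{l+1}(e_k + e_l) where 0 ≤ k < l ≤ M-1 (or x ∈ I_M(e_k) with l = M). Then ∫_{I_M} |K_n(x+t)| dμ(t) ≤ c · n · 2^{k+l-M} / n, i.e. ∫_{I_M} |K_n(x+t)| dμ(t) ≤ c · 2^{k+l-M}, for an absolute constant c. -/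
open MeasureTheory Finset

noncomputable section

namespace Fejer4

open scoped Classical

lemma zmod2_cases (a : ZMod 2) : a = 0 ∨ a = 1 := by revert a; decide

lemma mem_Iset {n : ℕ} {x : G} : x ∈ Iset n ↔ ∀ j < n, x j = 0 := by
  constructor <;> intro h j hj <;> simpa using h j hj

lemma mem_Iset_succ {j : ℕ} {x : G} : x ∈ Iset (j+1) ↔ x ∈ Iset j ∧ x j = 0 := by
  simp only [mem_Iset]
  constructor
  · exact fun h => ⟨fun i hi => h i (by omega), h j (by omega)⟩
  · rintro ⟨h1, h2⟩ i hi
    rcases Nat.lt_succ_iff_lt_or_eq.mp hi with hi' | hi'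
    · exact h1 i hi'
    · rw [hi']; exact h2

lemma walsh_eq_prod {n m : ℕ} (h : n < m) (x : G) :
    walsh n x = ∏ k ∈ Finset.range m, if n.testBit k then (-1 : ℝ) ^ (x k).val else 1 := by
  rw [walsh]
  apply Finset.prod_subset (Finset.range_subset_range.mpr h)
  intro k _ hk2
  simp only [Finset.mem_range, not_lt] at hk2
  rw [Nat.testBit_eq_false_of_lt
    (lt_of_lt_of_le (Nat.lt_two_pow_self (n := n)) (Nat.pow_le_pow_right (by norm_num) (by omega)))]
  simp

lemma walsh_two_pow (j : ℕ) (x : G) : walsh (2^j) x = (-1 : ℝ) ^ (x j).val := by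
  rw [walsh, Finset.prod_eq_single j]
  · simp [Nat.testBit_two_pow]
  · intro b _ hb
    simp [Nat.testBit_two_pow, Ne.symm hb]
  · intro hj
    exact absurd (Finset.mem_range.mpr (by have := Nat.lt_two_pow_self (n := j); omega)) hj

lemma abs_walsh_two_pow (j : ℕ) (x : G) : |walsh (2^j) x| = 1 := by
  rw [walsh_two_pow, abs_pow, abs_neg, abs_one, one_pow]

lemma walsh_two_pow_add {j i : ℕ} (hi : i < 2^j) (x : G) :
    walsh (2^j + i) x = walsh (2^j) x * walsh i x := by
  have hR1 : 2^j < 2^j + i + 1 := by omega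
  have hR2 : i < 2^j + i + 1 := by omega
  rw [walsh_eq_prod hR1 x, walsh_eq_prod hR2 x, ← Finset.prod_mul_distrib, walsh]
  apply Finset.prod_congr rfl
  intro c _
  rcases lt_trichotomy c j with hcj | hcj | hcj
  · rw [Nat.testBit_two_pow_add_gt hcj, Nat.testBit_two_pow]
    simp [show ¬ (j = c) by omega]
  · subst hcj
    rw [Nat.testBit_two_pow_add_eq, Nat.testBit_eq_false_of_lt hi, Nat.testBit_two_pow]
    simp
  · have h1 : (2^j + i).testBit c = false := by
      apply Nat.testBit_eq_false_of_lt
      calc 2^j + i < 2^j + 2^j := by omega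
        _ = 2^(j+1) := by rw [pow_succ]; ring
        _ ≤ 2^c := Nat.pow_le_pow_right (by norm_num) (by omega)
    have h2 : (2^j).testBit c = false := by
      rw [Nat.testBit_two_pow]; simp; omega
    have h3 : i.testBit c = false := by
      apply Nat.testBit_eq_false_of_lt
      exact lt_of_lt_of_le hi (Nat.pow_le_pow_right (by norm_num) (by omega))
    rw [h1, h2, h3]; simp

lemma Dker_two_pow_add {j i : ℕ} (hi : i ≤ 2^j) (x : G) :
    Dker (2^j + i) x = Dker (2^j) x + walsh (2^j) x * Dker i x := by
  unfold Dker
  rw [Finset.sum_range_add, Finset.mul_sum]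
  congr 1
  apply Finset.sum_congr rfl
  intro c hc
  exact walsh_two_pow_add (by have := Finset.mem_range.mp hc; omega) x

lemma Dker_two_pow (j : ℕ) (x : G) :
    Dker (2^j) x = if x ∈ Iset j then ((2:ℝ)^j) else 0 := by
  induction j with
  | zero =>
    have h1 : Dker (2^0) x = walsh 0 x := by simp [Dker]
    have hw : walsh 0 x = 1 := by simp [walsh]
    have hm : x ∈ Iset 0 := mem_Iset.mpr (fun j hj => by omega)
    rw [h1, hw, if_pos hm, pow_zero]
  | succ j ih =>
    have h2 : (2:ℕ)^(j+1) = 2^j + 2^j := by rw [pow_succ]; ring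
    rw [h2, Dker_two_pow_add le_rfl, ih, walsh_two_pow]
    rcases zmod2_cases (x j) with h | h
    · rw [h]
      by_cases hx : x ∈ Iset j
      · rw [if_pos hx, if_pos (mem_Iset_succ.mpr ⟨hx, h⟩)]
        simp [pow_succ]; ring
      · rw [if_neg hx, if_neg (fun hc => hx (mem_Iset_succ.mp hc).1)]
        simp
    · rw [h]
      have hx1 : x ∉ Iset (j+1) := by
        intro hc
        have := (mem_Iset_succ.mp hc).2
        rw [h] at this
        exact one_ne_zero this
      rw [if_neg hx1]
      have : ((1:ZMod 2)).val = 1 := by decide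
      rw [this]
      by_cases hx : x ∈ Iset j <;> simp [hx]

lemma Dker_two_pow_nonneg (j : ℕ) (x : G) : 0 ≤ Dker (2^j) x := by
  rw [Dker_two_pow]; split <;> positivity

lemma Dker_two_pow_le (j : ℕ) (x : G) : Dker (2^j) x ≤ 2^j := by
  rw [Dker_two_pow]
  split
  · exact le_rfl
  · positivity

/-- `A n = n * K_n`, the sum of Dirichlet kernels. -/
def A (n : ℕ) (x : G) : ℝ := ∑ i ∈ Finset.range n, Dker (i+1) x

lemma Kker_eq_A (n : ℕ) (x : G) : Kker n x = (1/(n:ℝ)) * A n x := rfl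

lemma A_two_pow_add {j a : ℕ} (ha : a ≤ 2^j) (x : G) :
    A (2^j + a) x = A (2^j) x + (a:ℝ) * Dker (2^j) x + walsh (2^j) x * A a x := by
  unfold A
  rw [Finset.sum_range_add]
  have hc : ∀ c ∈ Finset.range a, Dker (2^j + c + 1) x
      = Dker (2^j) x + walsh (2^j) x * Dker (c+1) x := by
    intro c hc
    rw [add_assoc]
    exact Dker_two_pow_add (by have := Finset.mem_range.mp hc; omega) x
  rw [Finset.sum_congr rfl hc, Finset.sum_add_distrib, Finset.sum_const, ← Finset.mul_sum]
  simp only [Finset.card_range, nsmul_eq_mul]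
  ring

lemma A_one (x : G) : A 1 x = 1 := by
  have : A 1 x = Dker 1 x := by simp [A]
  rw [this]
  have h1 : Dker 1 x = walsh 0 x := by simp [Dker]
  rw [h1]; simp [walsh]

lemma A_tri (j : ℕ) (y : G) :
    (y ∈ Iset j ∧ |A (2^j) y| ≤ 2^(2*j)) ∨
    (∃ t, t < j ∧ y ∈ cyl j (e t) ∧ |A (2^j) y| ≤ 2^(j+t)) ∨
    A (2^j) y = 0 := by
  induction j with
  | zero =>
    left
    refine ⟨mem_Iset.mpr (fun i hi => by omega), ?_⟩
    rw [pow_zero, pow_zero, A_one]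
    norm_num
  | succ j ih =>
    have h2 : (2:ℕ)^(j+1) = 2^j + 2^j := by rw [pow_succ]; ring
    have hA : A (2^(j+1)) y
        = A (2^j) y + ((2^j : ℕ):ℝ) * Dker (2^j) y + (-1:ℝ)^(y j).val * A (2^j) y := by
      rw [h2, A_two_pow_add le_rfl, walsh_two_pow]
    rcases zmod2_cases (y j) with h0 | h0
    · -- y j = 0
      rw [h0] at hA
      have hv : ((0:ZMod 2)).val = 0 := rfl
      rw [hv, pow_zero, one_mul] at hA
      rcases ih with ⟨hy, hb⟩ | ⟨t, ht, hy, hb⟩ | hz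
      · left
        refine ⟨mem_Iset_succ.mpr ⟨hy, h0⟩, ?_⟩
        rw [hA, Dker_two_pow, if_pos hy]
        have hD : ((2^j:ℕ):ℝ) * (2:ℝ)^j = 2^(2*j) := by
          push_cast; rw [← pow_add]; ring_nf
        calc |A (2^j) y + ((2^j:ℕ):ℝ) * (2:ℝ)^j + A (2^j) y|
            ≤ |A (2^j) y| + ((2^j:ℕ):ℝ) * (2:ℝ)^j + |A (2^j) y| := by
              have h1 := abs_add_le (A (2^j) y + ((2^j:ℕ):ℝ) * (2:ℝ)^j) (A (2^j) y)
              have h2' := abs_add_le (A (2^j) y) (((2^j:ℕ):ℝ) * (2:ℝ)^j)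
              have h3 : |((2^j:ℕ):ℝ) * (2:ℝ)^j| = ((2^j:ℕ):ℝ) * (2:ℝ)^j := by
                rw [abs_of_nonneg]; positivity
              linarith [h1, h2', h3]
          _ ≤ 2^(2*j) + 2^(2*j) + 2^(2*j) := by rw [hD]; linarith
          _ ≤ 2^(2*(j+1)) := by
              rw [show 2*(j+1) = 2*j + 2 by ring, pow_add]
              nlinarith [pow_pos (show (0:ℝ) < 2 by norm_num) (2*j)]
      · -- y ∈ cyl j (e t)
        have hyt : y t = 1 := by
          have := hy t ht
          simpa [e] using this
        have hynI : y ∉ Iset j := by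
          intro hc
          have := mem_Iset.mp hc t ht
          rw [hyt] at this
          exact one_ne_zero this
        right; left
        refine ⟨t, by omega, ?_, ?_⟩
        · intro i hi
          rcases Nat.lt_succ_iff_lt_or_eq.mp hi with hi' | hi'
          · exact hy i hi'
          · rw [hi', h0]
            simp [e, show ¬ (j = t) by omega]
        · rw [hA, Dker_two_pow, if_neg hynI, mul_zero, add_zero]
          have : |A (2^j) y + A (2^j) y| ≤ 2 * |A (2^j) y| := by
            rw [← two_mul, abs_mul]; simp
          calc |A (2^j) y + A (2^j) y| ≤ 2 * |A (2^j) y| := this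
            _ ≤ 2 * 2^(j+t) := by linarith
            _ = 2^(j+1+t) := by rw [show j+1+t = (j+t)+1 by ring, pow_succ]; ring
      · -- A (2^j) y = 0
        rw [hz] at hA
        simp only [zero_add, mul_zero, add_zero] at hA
        by_cases hy : y ∈ Iset j
        · left
          refine ⟨mem_Iset_succ.mpr ⟨hy, h0⟩, ?_⟩
          rw [hA, Dker_two_pow, if_pos hy]
          have : ((2^j:ℕ):ℝ) * (2:ℝ)^j = 2^(2*j) := by
            push_cast; rw [← pow_add]; ring_nf
          rw [this, abs_of_nonneg (by positivity)]
          exact pow_le_pow_right₀ (by norm_num) (by omega)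
        · right; right
          rw [hA, Dker_two_pow, if_neg hy, mul_zero]
    · -- y j = 1
      rw [h0] at hA
      have hv : ((1:ZMod 2)).val = 1 := by decide
      rw [hv, pow_one] at hA
      have hA' : A (2^(j+1)) y = ((2^j:ℕ):ℝ) * Dker (2^j) y := by rw [hA]; ring
      by_cases hy : y ∈ Iset j
      · right; left
        refine ⟨j, by omega, ?_, ?_⟩
        · intro i hi
          rcases Nat.lt_succ_iff_lt_or_eq.mp hi with hi' | hi'
          · rw [mem_Iset.mp hy i hi']
            simp [e, show ¬ (i = j) by omega]
          · rw [hi', h0]; simp [e]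
        · rw [hA', Dker_two_pow, if_pos hy]
          have : ((2^j:ℕ):ℝ) * (2:ℝ)^j = 2^(2*j) := by
            push_cast; rw [← pow_add]; ring_nf
          rw [this, abs_of_nonneg (by positivity)]
          exact pow_le_pow_right₀ (by norm_num) (by omega)
      · right; right
        rw [hA', Dker_two_pow, if_neg hy, mul_zero]

lemma A_two_pow_abs_le (j : ℕ) (y : G) : |A (2^j) y| ≤ 2^(2*j) := by
  rcases A_tri j y with ⟨_, hb⟩ | ⟨t, ht, _, hb⟩ | hz
  · exact hb
  · exact le_trans hb (pow_le_pow_right₀ (by norm_num) (by omega))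
  · rw [hz, abs_zero]; positivity

lemma A_master {m : ℕ} : ∀ {n : ℕ}, n < 2^m → ∀ (y : G),
    |A n y| ≤ ∑ j ∈ Finset.range m, (|A (2^j) y| + (2:ℝ)^j * Dker (2^j) y) := by
  induction m with
  | zero =>
    intro n hn y
    interval_cases n
    simp [A]
  | succ m ih =>
    intro n hn y
    have hterm : (0:ℝ) ≤ |A (2^m) y| + (2:ℝ)^m * Dker (2^m) y := by
      have := Dker_two_pow_nonneg m y
      positivity
    by_cases h : n < 2^m
    · rw [Finset.sum_range_succ]
      linarith [ih h y]
    · push_neg at h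
      set a := n - 2^m with ha
      have han : n = 2^m + a := by omega
      have haa : a < 2^m := by
        have : n < 2^(m+1) := hn
        rw [pow_succ] at this
        omega
      rw [han, A_two_pow_add (le_of_lt haa)]
      have h1 : |A (2^m) y + (a:ℝ) * Dker (2^m) y + walsh (2^m) y * A a y|
          ≤ |A (2^m) y| + (a:ℝ) * Dker (2^m) y + |A a y| := by
        have hD := Dker_two_pow_nonneg m y
        have habs : |walsh (2^m) y * A a y| = |A a y| := by
          rw [abs_mul, abs_walsh_two_pow, one_mul]
        calc |A (2^m) y + (a:ℝ) * Dker (2^m) y + walsh (2^m) y * A a y|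
            ≤ |A (2^m) y + (a:ℝ) * Dker (2^m) y| + |walsh (2^m) y * A a y| := abs_add_le _ _
          _ ≤ |A (2^m) y| + |(a:ℝ) * Dker (2^m) y| + |A a y| := by
              rw [habs]; linarith [abs_add_le (A (2^m) y) ((a:ℝ) * Dker (2^m) y)]
          _ = |A (2^m) y| + (a:ℝ) * Dker (2^m) y + |A a y| := by
              rw [abs_of_nonneg (mul_nonneg (Nat.cast_nonneg a) hD)]
      have h2 : (a:ℝ) * Dker (2^m) y ≤ (2:ℝ)^m * Dker (2^m) y := by
        apply mul_le_mul_of_nonneg_right _ (Dker_two_pow_nonneg m y)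
        calc (a:ℝ) ≤ ((2^m:ℕ):ℝ) := by exact_mod_cast le_of_lt haa
          _ = (2:ℝ)^m := by push_cast; ring
      rw [Finset.sum_range_succ]
      linarith [ih haa y]

lemma measurable_walsh (n : ℕ) : Measurable (walsh n) := by
  unfold walsh
  apply Finset.measurable_prod
  intro k _
  by_cases h : n.testBit k
  · simp only [h, if_true]
    show Measurable ((fun b : ZMod 2 => ((-1:ℝ)) ^ b.val) ∘ (fun x : G => x k))
    exact measurable_from_top.comp (measurable_pi_apply k)
  · simp only [h, if_false]
    exact measurable_const

lemma measurable_Dker (n : ℕ) : Measurable (Dker n) := by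
  unfold Dker
  exact Finset.measurable_sum _ (fun i _ => measurable_walsh i)

lemma measurable_A (n : ℕ) : Measurable (A n) := by
  unfold A
  exact Finset.measurable_sum _ (fun i _ => measurable_Dker (i+1))

lemma measurable_shift (x : G) : Measurable (fun t : G => x + t) := by
  apply measurable_pi_lambda
  intro i
  exact Measurable.comp (measurable_from_top : Measurable (fun b : ZMod 2 => x i + b)) (measurable_pi_apply i)

lemma measurableSet_cyl (m : ℕ) (y : G) : MeasurableSet (cyl m y) := by
  have hrw : cyl m y = ⋂ j ∈ Finset.range m, (fun x : G => x j) ⁻¹' {y j} := by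
    ext z
    simp [cyl, Finset.mem_range]
  rw [hrw]
  apply MeasurableSet.biInter (Finset.range m).countable_toSet
  intro j _
  exact measurable_pi_apply j trivial

end Fejer4

open Fejer4 in
/-- local integral estimate for the Fejér kernel. -/
theorem fejer_local_integral_estimate :
    ∃ c : ℝ, 0 < c ∧
      ∀ (μ : Measure G), (∀ (m : ℕ) (y : G), μ (cyl m y) = (2 : ENNReal)⁻¹ ^ m) →
        ∀ (M n k l : ℕ) (x : G), 2 ^ M ≤ n → k < l → l ≤ M →
          ((l < M ∧ x ∈ cyl (l + 1) (e k + e l)) ∨ (l = M ∧ x ∈ cyl M (e k))) →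
          ∫ t in Iset M, |Kker n (x + t)| ∂μ ≤ c * (2 : ℝ) ^ ((k : ℤ) + l - M) := by
  refine ⟨4, by norm_num, ?_⟩
  intro μ hμ M n k l x hnM hkl hlM hx
  haveI : IsFiniteMeasure μ := by
    constructor
    have huniv : (Set.univ : Set G) = cyl 0 0 := by
      ext z; simp [cyl]
    rw [huniv, hμ]
    simp
  have hkM : k < M := lt_of_lt_of_le hkl hlM
  have hxk : x k = 1 := by
    rcases hx with ⟨hlM', hx⟩ | ⟨hleq, hx⟩
    · have h := hx k (by omega)
      rw [h]
      show e k k + e l k = 1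
      simp [e, show ¬ (k = l) by omega]
    · have h := hx k (by omega)
      rw [h]
      simp [e]
  have hn0 : 0 < n := lt_of_lt_of_le (by positivity : 0 < 2^M) hnM
  set m := n.size with hm
  have hnlt : n < 2^m := Nat.size_le.mp le_rfl
  have hmpos : 0 < m := Nat.size_pos.mpr hn0
  have h2m : 2^(m-1) ≤ n := Nat.lt_size.mp (by omega)
  have hIM : MeasurableSet (Iset M) := measurableSet_cyl M 0
  have hμIM : μ (Iset M) = (2:ENNReal)⁻¹ ^ M := hμ M 0
  have hμIMlt : μ (Iset M) < ⊤ := by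
    rw [hμIM]
    exact ENNReal.pow_lt_top (by simp)
  have hμIMtoReal : (μ (Iset M)).toReal = (2⁻¹:ℝ)^M := by
    rw [hμIM]; simp
  set F : ℕ → G → ℝ := fun j t => |A (2^j) (x+t)| + (2:ℝ)^j * Dker (2^j) (x+t) with hF
  have hFnonneg : ∀ j t, 0 ≤ F j t := by
    intro j t
    have := Dker_two_pow_nonneg j (x+t)
    simp only [hF]
    positivity
  have hFmeas : ∀ j, Measurable (F j) := by
    intro j
    apply Measurable.add
    · exact ((measurable_A (2^j)).comp (measurable_shift x)).abs
    · exact ((measurable_Dker (2^j)).comp (measurable_shift x)).const_mul _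
  have hFbdd : ∀ j t, F j t ≤ 2^(2*j) + 2^(2*j) := by
    intro j t
    have h1 := A_two_pow_abs_le j (x+t)
    have h2 := Dker_two_pow_le j (x+t)
    have h3 : (2:ℝ)^j * Dker (2^j) (x+t) ≤ (2:ℝ)^j * 2^j :=
      mul_le_mul_of_nonneg_left h2 (by positivity)
    have h4 : (2:ℝ)^j * (2:ℝ)^j = 2^(2*j) := by rw [← pow_add]; ring_nf
    simp only [hF]
    linarith
  have hFint : ∀ j, MeasureTheory.IntegrableOn (F j) (Iset M) μ := by
    intro j
    apply MeasureTheory.Integrable.mono' (MeasureTheory.integrable_const ((2:ℝ)^(2*j) + 2^(2*j)))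
      ((hFmeas j).aestronglyMeasurable)
    filter_upwards with t
    rw [Real.norm_eq_abs, abs_of_nonneg (hFnonneg j t)]
    exact hFbdd j t
  have key : ∀ j, ∀ t ∈ Iset M, F j t ≤ 2^(j+k+1) := by
    intro j t ht
    have hyk : (x + t) k = 1 := by
      have htk : t k = 0 := mem_Iset.mp ht k hkM
      show x k + t k = 1
      rw [hxk, htk, add_zero]
    by_cases hjk : j ≤ k
    · calc F j t ≤ 2^(2*j) + 2^(2*j) := hFbdd j t
        _ = 2^(2*j+1) := by rw [pow_succ]; ring
        _ ≤ 2^(j+k+1) := pow_le_pow_right₀ (by norm_num) (by omega)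
    · push_neg at hjk
      have hnI : (x+t) ∉ Iset j := by
        intro hI
        have h1 := mem_Iset.mp hI k (by omega)
        rw [hyk] at h1
        exact one_ne_zero h1
      have hD : Dker (2^j) (x+t) = 0 := by
        rw [Dker_two_pow, if_neg hnI]
      simp only [hF, hD, mul_zero, add_zero]
      rcases A_tri j (x+t) with ⟨hI, _⟩ | ⟨t', ht', hy, hb⟩ | hz
      · exact absurd hI hnI
      · have htk' : t' = k := by
          by_contra hne
          have h := hy k (by omega)
          rw [hyk] at h
          have he0 : e t' k = 0 := by
            simp [e, show ¬ (k = t') from fun hc => hne hc.symm]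
          rw [he0] at h
          exact one_ne_zero h
        rw [htk'] at hb
        exact le_trans hb (pow_le_pow_right₀ (by norm_num) (by omega))
      · rw [hz]
        simp only [abs_zero]
        positivity
  have step3 : ∀ j, (∫ t in Iset M, F j t ∂μ) ≤ 2^(j+k+1) * (2⁻¹:ℝ)^M := by
    intro j
    have hb := MeasureTheory.norm_setIntegral_le_of_norm_le_const (C := 2^(j+k+1)) hμIMlt
      (fun t ht => by rw [Real.norm_eq_abs, abs_of_nonneg (hFnonneg j t)]; exact key j t ht)
    rw [Real.norm_eq_abs, measureReal_def, hμIMtoReal] at hb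
    exact le_trans (le_abs_self _) hb
  have hintAbs : MeasureTheory.IntegrableOn (fun t => |A n (x+t)|) (Iset M) μ := by
    apply MeasureTheory.Integrable.mono'
      (MeasureTheory.integrable_const (∑ j ∈ Finset.range m, ((2:ℝ)^(2*j) + 2^(2*j))))
      (((measurable_A n).comp (measurable_shift x)).abs.aestronglyMeasurable)
    filter_upwards with t
    rw [Real.norm_eq_abs, abs_abs]
    calc |A n (x+t)| ≤ ∑ j ∈ Finset.range m, F j t := A_master hnlt (x+t)
      _ ≤ _ := Finset.sum_le_sum (fun j _ => hFbdd j t)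
  have step2 : ∫ t in Iset M, |A n (x+t)| ∂μ
      ≤ ∑ j ∈ Finset.range m, (2:ℝ)^(j+k+1) * (2⁻¹:ℝ)^M := by
    calc ∫ t in Iset M, |A n (x+t)| ∂μ
        ≤ ∫ t in Iset M, (∑ j ∈ Finset.range m, F j t) ∂μ := by
          apply MeasureTheory.setIntegral_mono_on hintAbs _ hIM
            (fun t _ => A_master hnlt (x+t))
          exact MeasureTheory.integrable_finset_sum _ (fun j _ => hFint j)
      _ = ∑ j ∈ Finset.range m, ∫ t in Iset M, F j t ∂μ :=
          MeasureTheory.integral_finset_sum _ (fun j _ => hFint j)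
      _ ≤ ∑ j ∈ Finset.range m, (2:ℝ)^(j+k+1) * (2⁻¹:ℝ)^M :=
          Finset.sum_le_sum (fun j _ => step3 j)
  have step1 : ∫ t in Iset M, |Kker n (x + t)| ∂μ
      = (1/(n:ℝ)) * ∫ t in Iset M, |A n (x+t)| ∂μ := by
    have hpt : ∀ t, |Kker n (x+t)| = (1/(n:ℝ)) * |A n (x+t)| := by
      intro t
      rw [Kker_eq_A, abs_mul, abs_of_nonneg (by positivity : (0:ℝ) ≤ 1/(n:ℝ))]
    simp_rw [hpt]
    exact MeasureTheory.integral_const_mul _ _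
  -- arithmetic wrap-up
  have hsum : ∑ j ∈ Finset.range m, (2:ℝ)^(j+k+1) * (2⁻¹:ℝ)^M
      ≤ (2:ℝ)^m * ((2:ℝ)^(k+1) * (2⁻¹:ℝ)^M) := by
    calc ∑ j ∈ Finset.range m, (2:ℝ)^(j+k+1) * (2⁻¹:ℝ)^M
        = (∑ j ∈ Finset.range m, (2:ℝ)^j) * ((2:ℝ)^(k+1) * (2⁻¹:ℝ)^M) := by
          rw [Finset.sum_mul]
          apply Finset.sum_congr rfl
          intro j _
          rw [show j+k+1 = j + (k+1) by ring, pow_add]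
          ring
      _ ≤ (2:ℝ)^m * ((2:ℝ)^(k+1) * (2⁻¹:ℝ)^M) := by
          apply mul_le_mul_of_nonneg_right _ (by positivity)
          rw [geom_sum_eq (by norm_num : (2:ℝ) ≠ 1)]
          norm_num
  have hfrac : (1:ℝ)/(n:ℝ) ≤ (2⁻¹:ℝ)^(m-1) := by
    have h2 : ((2:ℝ))^(m-1) ≤ (n:ℝ) := by exact_mod_cast h2m
    have hpos : (0:ℝ) < 2^(m-1) := by positivity
    rw [inv_pow, one_div]
    exact inv_anti₀ hpos h2
  have hApos : 0 ≤ ∫ t in Iset M, |A n (x+t)| ∂μ := by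
    apply MeasureTheory.integral_nonneg
    intro t
    exact abs_nonneg _
  have hchain : ∫ t in Iset M, |Kker n (x + t)| ∂μ ≤ (2:ℝ)^(k+2) * (2⁻¹:ℝ)^M := by
    rw [step1]
    have h1 : (1/(n:ℝ)) * ∫ t in Iset M, |A n (x+t)| ∂μ
        ≤ (1/(n:ℝ)) * (∑ j ∈ Finset.range m, (2:ℝ)^(j+k+1) * (2⁻¹:ℝ)^M) :=
      mul_le_mul_of_nonneg_left step2 (by positivity)
    have h2 : (1/(n:ℝ)) * (∑ j ∈ Finset.range m, (2:ℝ)^(j+k+1) * (2⁻¹:ℝ)^M)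
        ≤ (2⁻¹:ℝ)^(m-1) * ((2:ℝ)^m * ((2:ℝ)^(k+1) * (2⁻¹:ℝ)^M)) := by
      apply mul_le_mul hfrac hsum _ (by positivity)
      positivity
    have h3 : (2⁻¹:ℝ)^(m-1) * ((2:ℝ)^m * ((2:ℝ)^(k+1) * (2⁻¹:ℝ)^M))
        = (2:ℝ)^(k+2) * (2⁻¹:ℝ)^M := by
      have hm' : m = (m-1)+1 := by omega
      rw [inv_pow]
      rw [hm', pow_succ (2:ℝ) (m-1)]
      have hne : ((2:ℝ)^(m-1)) ≠ 0 := by positivity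
      field_simp
      rw [show m - 1 + 1 - 1 = m - 1 by omega]; ring
    linarith
  have hfinal : (2:ℝ)^(k+2) * (2⁻¹:ℝ)^M ≤ 4 * (2:ℝ)^((k:ℤ) + l - M) := by
    have hz : (2:ℝ)^((k:ℤ) + l - M) = (2:ℝ)^(k+l) * (2⁻¹:ℝ)^M := by
      rw [sub_eq_add_neg, zpow_add₀ (by norm_num : (2:ℝ) ≠ 0), zpow_neg]
      rw [show (k:ℤ) + (l:ℤ) = ((k+l:ℕ):ℤ) by push_cast; ring]
      rw [zpow_natCast, zpow_natCast, inv_pow]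
    rw [hz]
    have h1 : (2:ℝ)^(k+2) ≤ 4 * (2:ℝ)^(k+l) := by
      have : (2:ℝ)^(k+2) = 4 * (2:ℝ)^k := by rw [pow_add]; ring
      rw [this]
      have := pow_le_pow_right₀ (by norm_num : (1:ℝ) ≤ 2) (by omega : k ≤ k + l)
      linarith
    have hp : (0:ℝ) ≤ (2⁻¹:ℝ)^M := by positivity
    nlinarith
  linarith
end
end

section
/- For every n ∈ ℕ, (2^n − 1) K_{2^n − 1} = ∑_{k=0}^{n-1} (∏_{j=k+1}^{n-1} w_{2^j}) · (2^k K_{2^k} + (2^k − 1) D_{2^k}) pointwise on the dyadic group G. -/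
open MeasureTheory Finset

noncomputable section

lemma walsh_eq_prod (n M : ℕ) (hM : n < M) (x : G) :
    walsh n x = ∏ k ∈ Finset.range M, if n.testBit k then (-1 : ℝ) ^ (x k).val else 1 := by
  unfold walsh
  apply Finset.prod_subset
  · exact Finset.range_subset_range.2 (by omega)
  · intro k hk hk'
    simp only [Finset.mem_range, not_lt] at hk'
    have : n < 2 ^ k :=
      lt_of_lt_of_le (Nat.lt_two_pow_self (n := n)) (Nat.pow_le_pow_right (by norm_num) (by omega))
    rw [Nat.testBit_lt_two_pow this]
    simp

lemma walsh_two_pow_add (j m : ℕ) (hm : m < 2 ^ j) (x : G) :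
    walsh (2 ^ j + m) x = walsh (2 ^ j) x * walsh m x := by
  have h1 : 2 ^ j + m < 2 ^ j + m + 1 := Nat.lt_succ_self _
  rw [walsh_eq_prod (2 ^ j + m) (2 ^ j + m + 1) h1,
      walsh_eq_prod (2 ^ j) (2 ^ j + m + 1) (by omega),
      walsh_eq_prod m (2 ^ j + m + 1) (by omega), ← Finset.prod_mul_distrib]
  apply Finset.prod_congr rfl
  intro k _
  have hbit : (2 ^ j + m).testBit k = ((2 ^ j).testBit k || m.testBit k) := by
    rcases lt_trichotomy k j with h | h | h
    · rw [Nat.testBit_two_pow_add_gt h, Nat.testBit_two_pow_of_ne (by omega)]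
      simp
    · subst h
      rw [Nat.testBit_two_pow_add_eq, Nat.testBit_two_pow_self,
          Nat.testBit_lt_two_pow hm]
      simp
    · have h2 : 2 ^ j + m < 2 ^ k := by
        calc 2 ^ j + m < 2 ^ j + 2 ^ j := by omega
        _ = 2 ^ (j + 1) := by ring
        _ ≤ 2 ^ k := Nat.pow_le_pow_right (by norm_num) h
      rw [Nat.testBit_lt_two_pow h2, Nat.testBit_two_pow_of_ne (by omega),
          Nat.testBit_lt_two_pow (lt_of_lt_of_le hm (Nat.pow_le_pow_right (by norm_num) h.le))]
      simp
  rw [hbit]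
  have hdisj : (2 ^ j).testBit k = true → m.testBit k = false := by
    intro h2
    rw [Nat.testBit_two_pow] at h2
    have hjk : j = k := by simpa using h2
    subst hjk
    exact Nat.testBit_lt_two_pow hm
  cases h2 : (2 ^ j).testBit k with
  | false => cases h3 : m.testBit k <;> simp [h2, h3]
  | true =>
    have h3 := hdisj h2
    simp [h2, h3]

lemma Dker_two_pow_add (j m : ℕ) (hm : m ≤ 2 ^ j) (x : G) :
    Dker (2 ^ j + m) x = Dker (2 ^ j) x + walsh (2 ^ j) x * Dker m x := by
  unfold Dker
  rw [Finset.sum_range_add, Finset.mul_sum]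
  congr 1
  apply Finset.sum_congr rfl
  intro r hr
  simp only [Finset.mem_range] at hr
  exact walsh_two_pow_add j r (by omega) x

/-- `S n x = ∑_{m < 2^n} D_m x`. -/
def Sker (n : ℕ) (x : G) : ℝ := ∑ m ∈ Finset.range (2 ^ n), Dker m x

lemma Sker_succ (n : ℕ) (x : G) :
    Sker (n + 1) x = Sker n x + 2 ^ n * Dker (2 ^ n) x + walsh (2 ^ n) x * Sker n x := by
  unfold Sker
  have h : 2 ^ (n + 1) = 2 ^ n + 2 ^ n := by ring
  rw [h, Finset.sum_range_add]
  have : ∀ r ∈ Finset.range (2 ^ n), Dker (2 ^ n + r) x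
      = Dker (2 ^ n) x + walsh (2 ^ n) x * Dker r x := by
    intro r hr
    simp only [Finset.mem_range] at hr
    exact Dker_two_pow_add n r hr.le x
  rw [Finset.sum_congr rfl this, Finset.sum_add_distrib, Finset.sum_const,
      ← Finset.mul_sum]
  simp [Finset.card_range]
  ring

lemma Kker_two_pow (k : ℕ) (x : G) :
    (2 : ℝ) ^ k * Kker (2 ^ k) x = Sker k x + Dker (2 ^ k) x := by
  unfold Kker Sker
  have h2 : (((2 : ℕ) ^ k : ℕ) : ℝ) = (2 : ℝ) ^ k := by push_cast; ring
  rw [h2]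
  have hne : (2 : ℝ) ^ k ≠ 0 := by positivity
  rw [← mul_assoc, mul_one_div, div_self hne, one_mul]
  have : ∑ m ∈ Finset.range (2 ^ k), Dker m x + Dker (2 ^ k) x
      = ∑ m ∈ Finset.range (2 ^ k + 1), Dker m x := by
    rw [Finset.sum_range_succ]
  rw [this]
  have : ∑ m ∈ Finset.range (2 ^ k + 1), Dker m x
      = ∑ m ∈ Finset.range (2 ^ k), Dker (m + 1) x + Dker 0 x := by
    rw [Finset.sum_range_succ']
  rw [this]
  simp [Dker]

lemma rhs_eq_Sker (n : ℕ) (x : G) :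
    ∑ k ∈ Finset.range n,
        (∏ j ∈ Finset.Ico (k + 1) n, walsh (2 ^ j) x) *
          ((2 : ℝ) ^ k * Kker (2 ^ k) x + ((2 : ℝ) ^ k - 1) * Dker (2 ^ k) x)
      = Sker n x := by
  induction n with
  | zero => simp [Sker, Dker]
  | succ n ih =>
    rw [Finset.sum_range_succ]
    have hlast : (∏ j ∈ Finset.Ico (n + 1) (n + 1), walsh (2 ^ j) x) = 1 := by simp
    have hterm : ∀ k ∈ Finset.range n,
        (∏ j ∈ Finset.Ico (k + 1) (n + 1), walsh (2 ^ j) x) *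
          ((2 : ℝ) ^ k * Kker (2 ^ k) x + ((2 : ℝ) ^ k - 1) * Dker (2 ^ k) x)
        = walsh (2 ^ n) x * ((∏ j ∈ Finset.Ico (k + 1) n, walsh (2 ^ j) x) *
          ((2 : ℝ) ^ k * Kker (2 ^ k) x + ((2 : ℝ) ^ k - 1) * Dker (2 ^ k) x)) := by
      intro k hk
      simp only [Finset.mem_range] at hk
      rw [Finset.prod_Ico_succ_top (by omega)]
      ring
    rw [Finset.sum_congr rfl hterm, ← Finset.mul_sum, ih, hlast, one_mul, Kker_two_pow,
        Sker_succ]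
    ring

/-- decomposition of `(2^n - 1) K_{2^n - 1}`. -/
theorem fejer_pow_two_sub_one (n : ℕ) (x : G) :
    ((2 : ℝ) ^ n - 1) * Kker (2 ^ n - 1) x =
      ∑ k ∈ Finset.range n,
        (∏ j ∈ Finset.Ico (k + 1) n, walsh (2 ^ j) x) *
          ((2 : ℝ) ^ k * Kker (2 ^ k) x + ((2 : ℝ) ^ k - 1) * Dker (2 ^ k) x) := by
  rw [rhs_eq_Sker]
  rcases Nat.eq_zero_or_pos n with hn | hn
  · subst hn
    simp [Sker, Dker, Kker]
  · have h1 : 1 ≤ 2 ^ n := Nat.one_le_two_pow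
    have hcast : ((2 ^ n - 1 : ℕ) : ℝ) = (2 : ℝ) ^ n - 1 := by
      push_cast [h1]; ring
    have hne : (2 : ℝ) ^ n - 1 ≠ 0 := by
      have : (1 : ℝ) < 2 ^ n := by
        have := Nat.one_lt_two_pow_iff.2 (by omega : n ≠ 0)
        exact_mod_cast this
      linarith
    unfold Kker Sker
    rw [hcast, mul_comm ((1 : ℝ) / _), mul_one_div, mul_comm ((2 : ℝ) ^ n - 1),
        div_mul_cancel₀ _ hne]
    have : ∑ m ∈ Finset.range (2 ^ n), Dker m x
        = ∑ m ∈ Finset.range (2 ^ n - 1), Dker (m + 1) x + Dker 0 x := by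
      conv_lhs => rw [show 2 ^ n = (2 ^ n - 1) + 1 by omega]
      rw [Finset.sum_range_succ']
    rw [this]
    simp [Dker]
end
end
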